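/- Let G be a temporal graph and k ≥ 1 an integer. If [ts,te] and [ts',te'] are windows with C_[ts,te] and C_[ts',te'] both nonempty and TTI(C_[ts,te]) = TTI(C_[ts',te']), then C_[ts,te] = C_[ts',te']. That is, a nonempty temporal k-core is uniquely determined by its tightest time interval. -/

import Mathlib

variable {V : Type*} [Fintype V]

/-- A vertex set `S` is `k`-dense in `G` if every vertex of `S` has
at least `k` neighbors of `G` lying in `S`. -/
def KDense (G : SimpleGraph V) (k : ℕ) (S : Set V) : Prop :=
  ∀ v ∈ S, k ≤ (S ∩ G.neighborSet v).ncard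

/-- The `k`-core of `G`: the union of all `k`-dense vertex sets. -/
def kCore (G : SimpleGraph V) (k : ℕ) : Set V :=
  ⋃₀ {S | KDense G k S}

/-- A temporal graph on a vertex set `V`: a finite set of temporal edges
`(u, v, t)` with `u ≠ v` and integer timestamp `t`. -/
structure TemporalGraph (V : Type*) where
  E : Finset (V × V × ℤ)
  ne : ∀ e ∈ E, e.1 ≠ e.2.1

/-- The projected (snapshot) graph of `G` over the time window `[ts, te]`. -/
def TemporalGraph.proj (G : TemporalGraph V) (ts te : ℤ) : SimpleGraph V where
  Adj u v := ∃ t, ts ≤ t ∧ t ≤ te ∧ ((u, v, t) ∈ G.E ∨ (v, u, t) ∈ G.E)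
  symm := by
    constructor
    rintro u v ⟨t, h1, h2, h3⟩
    exact ⟨t, h1, h2, h3.symm⟩
  loopless := by
    constructor
    rintro u ⟨t, h1, h2, h3⟩
    rcases h3 with h | h <;> exact G.ne _ h rfl

/-- The temporal `k`-core of the window `[ts, te]`: all temporal edges with
timestamp in `[ts, te]` whose both endpoints lie in the `k`-core of the
projected graph `G_[ts,te]`. -/
def TemporalGraph.tCore (G : TemporalGraph V) (k : ℕ) (ts te : ℤ) :
    Set (V × V × ℤ) :=
  {e | e ∈ G.E ∧ ts ≤ e.2.2 ∧ e.2.2 ≤ te ∧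
    e.1 ∈ kCore (G.proj ts te) k ∧ e.2.1 ∈ kCore (G.proj ts te) k}

/-- `[a, b]` is the tightest time interval of the edge set `C`:
`a` and `b` are the minimum and maximum timestamps of the edges in `C`. -/
def IsTTI (C : Set (V × V × ℤ)) (a b : ℤ) : Prop :=
  IsLeast {t | ∃ e ∈ C, e.2.2 = t} a ∧ IsGreatest {t | ∃ e ∈ C, e.2.2 = t} b

/-!
If `[a, b]` is the tightest time interval of `C_[ts,te]`, then `[a, b] ⊆ [ts, te]` and every
edge of `G_[ts,te]` between two core vertices is witnessed by a temporal edge of `C_[ts,te]`,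
hence by one with timestamp in `[a, b]`. So the `k`-core of `G_[ts,te]` stays `k`-dense in
`G_[a,b]`, and by monotonicity of the `k`-core the two projected graphs have the same `k`-core.
Thus `C_[ts,te] = C_[a,b]`, which depends only on the tightest time interval.
-/

variable {k : ℕ}

section KCore

variable {G G' : SimpleGraph V} {S : Set V}

omit [Fintype V] in
theorem KDense.subset_kCore (hS : KDense G k S) : S ⊆ kCore G k :=
  Set.subset_sUnion_of_mem hS

theorem kDense_kCore (G : SimpleGraph V) (k : ℕ) : KDense G k (kCore G k) := by
  rintro v ⟨S, hS, hvS⟩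
  exact (hS v hvS).trans <| Set.ncard_le_ncard
    (Set.inter_subset_inter_left _ (Set.subset_sUnion_of_mem hS)) (Set.toFinite _)

theorem KDense.of_adj_imp (hS : KDense G k S)
    (h : ∀ u ∈ S, ∀ v ∈ S, G.Adj u v → G'.Adj u v) : KDense G' k S := by
  intro u hu
  exact (hS u hu).trans <| Set.ncard_le_ncard
    (fun v ⟨hv, huv⟩ => ⟨hv, h u hu v hv huv⟩) (Set.toFinite _)

theorem kCore_mono (h : G ≤ G') : kCore G k ⊆ kCore G' k :=
  ((kDense_kCore G k).of_adj_imp fun _ _ _ _ huv => h huv).subset_kCore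

end KCore

namespace TemporalGraph

variable (G : TemporalGraph V) {ts te a b : ℤ}

omit [Fintype V] in
theorem proj_mono {ts' te' : ℤ} (hs : ts' ≤ ts) (he : te ≤ te') :
    G.proj ts te ≤ G.proj ts' te' :=
  fun _ _ ⟨t, h₁, h₂, hE⟩ => ⟨t, hs.trans h₁, h₂.trans he, hE⟩

theorem kCore_proj_subset_of_tCore_subset
    (hI : ∀ e ∈ G.tCore k ts te, a ≤ e.2.2 ∧ e.2.2 ≤ b) :
    kCore (G.proj ts te) k ⊆ kCore (G.proj a b) k := by
  refine ((kDense_kCore _ k).of_adj_imp ?_).subset_kCore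
  rintro u hu v hv ⟨t, h₁, h₂, hE⟩
  have hab : a ≤ t ∧ t ≤ b := by
    rcases hE with hE | hE
    · exact hI _ ⟨hE, h₁, h₂, hu, hv⟩
    · exact hI _ ⟨hE, h₁, h₂, hv, hu⟩
  exact ⟨t, hab.1, hab.2, hE⟩

theorem tCore_eq_of_isTTI (hT : IsTTI (G.tCore k ts te) a b) :
    G.tCore k ts te = G.tCore k a b := by
  obtain ⟨⟨⟨e₀, he₀, rfl⟩, hlb⟩, ⟨⟨e₁, he₁, rfl⟩, hub⟩⟩ := hT
  have hI : ∀ e ∈ G.tCore k ts te, e₀.2.2 ≤ e.2.2 ∧ e.2.2 ≤ e₁.2.2 :=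
    fun e he => ⟨hlb ⟨e, he, rfl⟩, hub ⟨e, he, rfl⟩⟩
  have hcore : kCore (G.proj ts te) k = kCore (G.proj e₀.2.2 e₁.2.2) k :=
    (G.kCore_proj_subset_of_tCore_subset hI).antisymm
      (kCore_mono (G.proj_mono he₀.2.1 he₁.2.2.1))
  ext e
  constructor
  · intro he
    obtain ⟨ha, hb⟩ := hI e he
    exact ⟨he.1, ha, hb, hcore ▸ he.2.2.2.1, hcore ▸ he.2.2.2.2⟩
  · rintro ⟨hE, ha, hb, hu, hv⟩
    exact ⟨hE, he₀.2.1.trans ha, hb.trans he₁.2.2.1, hcore ▸ hu, hcore ▸ hv⟩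

end TemporalGraph

theorem tCore_eq_of_TTI_eq_general (G : TemporalGraph V) (k : ℕ)
    (ts te ts' te' a b : ℤ)
    (hT1 : IsTTI (G.tCore k ts te) a b)
    (hT2 : IsTTI (G.tCore k ts' te') a b) :
    G.tCore k ts te = G.tCore k ts' te' := by
  rw [G.tCore_eq_of_isTTI hT1, G.tCore_eq_of_isTTI hT2]

theorem tCore_eq_of_TTI_eq (G : TemporalGraph V) (k : ℕ) (hk : 1 ≤ k)
    (ts te ts' te' a b : ℤ)
    (h1 : (G.tCore k ts te).Nonempty) (h2 : (G.tCore k ts' te').Nonempty)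
    (hT1 : IsTTI (G.tCore k ts te) a b)
    (hT2 : IsTTI (G.tCore k ts' te') a b) :
    G.tCore k ts te = G.tCore k ts' te' :=
  tCore_eq_of_TTI_eq_general G k ts te ts' te' a b hT1 hT2
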